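/- arXiv:2202.07885 — 8 statements merged into one kernel-verified Lean document; each statement's English description precedes it below -/
import Mathlib

section
/- For any string L of length n over a linearly ordered alphabet, the map φ(i) = occ_<(L, L[i]) + rank(L, i, L[i]) is a bijection from {1,...,n} to {1,...,n}, where occ_<(L,c) is the number of positions j with L[j] < c, and rank(L,i,c) is the number of positions j ≤ i with L[j] = c. -/
/-!
Ordering positions lexicographically by `(L i, i)` gives a strict linear order in which exactly
the positions counted by `φ i` lie at or below `i`, so `φ i` is the rank of `i` in that order;
ranks in a strict linear order on `n` elements are a bijection onto `{1, …, n}`.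
-/

open Finset

section Rank

variable {ι β : Type*} [Fintype ι] [LinearOrder β] {e : ι → β}

theorem card_filter_apply_le_lt_of_lt {i k : ι} (h : e i < e k) :
    #{j | e j ≤ e i} < #{j | e j ≤ e k} := by
  refine card_lt_card ⟨fun j hj => ?_, fun hsub => ?_⟩
  · simp only [mem_filter, mem_univ, true_and] at hj ⊢
    exact hj.trans h.le
  · have hk : k ∈ ({j | e j ≤ e i} : Finset ι) := hsub (by simp)
    simp only [mem_filter, mem_univ, true_and] at hk
    exact hk.not_gt h

theorem injective_card_filter_apply_le (he : Function.Injective e) :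
    Function.Injective fun i => #{j | e j ≤ e i} := by
  intro i k hik
  by_contra hne
  rcases lt_or_gt_of_ne (he.ne hne) with hlt | hlt
  · exact (card_filter_apply_le_lt_of_lt hlt).ne hik
  · exact (card_filter_apply_le_lt_of_lt hlt).ne' hik

theorem card_filter_apply_le_mem_Icc (i : ι) :
    #{j | e j ≤ e i} ∈ Set.Icc 1 (Fintype.card ι) :=
  ⟨card_pos.mpr ⟨i, by simp⟩, card_le_univ _⟩

theorem bijOn_card_filter_apply_le (he : Function.Injective e) :
    Set.BijOn (fun i => #{j | e j ≤ e i}) Set.univ (Set.Icc 1 (Fintype.card ι)) := by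
  have hmaps : Set.MapsTo (fun i => #{j | e j ≤ e i}) Set.univ (Set.Icc 1 (Fintype.card ι)) :=
    fun i _ => card_filter_apply_le_mem_Icc i
  have hinj := (injective_card_filter_apply_le he).injOn (s := Set.univ)
  refine ⟨hmaps, hinj, ?_⟩
  have hsurj := surjOn_of_injOn_of_card_le (s := (univ : Finset ι)) (t := Icc 1 (Fintype.card ι)) _
    (by rwa [coe_univ, coe_Icc]) (by rwa [coe_univ]) (by simp)
  rwa [coe_univ, coe_Icc] at hsurj

end Rank

theorem card_filter_lt_add_card_filter_le_and_eq {ι α : Type*} [Fintype ι] [LinearOrder ι]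
    [LinearOrder α] (L : ι → α) (i : ι) :
    #{j | L j < L i} + #{j | j ≤ i ∧ L j = L i} = #{j | toLex (L j, j) ≤ toLex (L i, i)} := by
  rw [← card_union_of_disjoint]
  · congr 1
    ext j
    simp only [mem_union, mem_filter, mem_univ, true_and, Prod.Lex.le_iff]
    tauto
  · exact disjoint_filter.mpr fun j _ hlt heq => hlt.ne heq.2

theorem lf_formula_bijective_general {α : Type*} [LinearOrder α] {n : ℕ}
    (L : Fin n → α) (φ : Fin n → ℕ)
    (hφ : ∀ i, φ i =
      (Finset.univ.filter (fun j => L j < L i)).card +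
      (Finset.univ.filter (fun j => j ≤ i ∧ L j = L i)).card) :
    Set.BijOn φ Set.univ (Set.Icc 1 n) := by
  have hφ_rank : φ = fun i => #{j | toLex (L j, j) ≤ toLex (L i, i)} :=
    funext fun i => (hφ i).trans (card_filter_lt_add_card_filter_le_and_eq L i)
  have hinj : Function.Injective fun i => toLex (L i, i) :=
    fun i k h => congrArg (fun p => (ofLex p).2) h
  simpa [hφ_rank] using bijOn_card_filter_apply_le hinj

/-- For a string `L` of length `n ≥ 1` over a linearly ordered alphabet,
the map `φ(i) = occ_<(L, L[i]) + rank(L, i, L[i])` is a bijection from `{1,...,n}`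
(the index set, here `Fin n`) to `{1,...,n}`. -/
theorem lf_formula_bijective {α : Type*} [LinearOrder α] {n : ℕ} (hn : 1 ≤ n)
    (L : Fin n → α) (φ : Fin n → ℕ)
    (hφ : ∀ i, φ i =
      (Finset.univ.filter (fun j => L j < L i)).card +
      (Finset.univ.filter (fun j => j ≤ i ∧ L j = L i)).card) :
    Set.BijOn φ Set.univ (Set.Icc 1 n) :=
  lf_formula_bijective_general L φ hφ
end

section
/- For any string L of length n over a linearly ordered alphabet and the map φ(i) = occ_<(L, L[i]) + rank(L, i, L[i]), one has φ(i) < φ(j) if and only if either L[i] < L[j], or L[i] = L[j] and i < j. -/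
lemma lf_aux {α : Type*} [LinearOrder α] {n : ℕ}
    (L : Fin n → α) (φ : Fin n → ℕ)
    (hφ : ∀ i, φ i =
      (Finset.univ.filter (fun j => L j < L i)).card +
      (Finset.univ.filter (fun j => j ≤ i ∧ L j = L i)).card)
    (i j : Fin n) (h : L i < L j ∨ (L i = L j ∧ i < j)) : φ i < φ j := by
  rw [hφ i, hφ j]
  rcases h with h | ⟨he, hij⟩
  · have h1 : (Finset.univ.filter (fun k => L k < L i)).card +
        (Finset.univ.filter (fun k : Fin n => k ≤ i ∧ L k = L i)).card ≤
        (Finset.univ.filter (fun k => L k < L j)).card := by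
      rw [← Finset.card_union_of_disjoint]
      · apply Finset.card_le_card
        intro k hk
        simp only [Finset.mem_union, Finset.mem_filter, Finset.mem_univ, true_and] at hk ⊢
        rcases hk with hk | ⟨_, hk⟩
        · exact lt_trans hk h
        · exact hk ▸ h
      · rw [Finset.disjoint_filter]
        rintro k _ hk ⟨_, hk'⟩
        exact absurd hk' (ne_of_lt hk)
    have h2 : 0 < (Finset.univ.filter (fun k : Fin n => k ≤ j ∧ L k = L j)).card := by
      apply Finset.card_pos.mpr
      exact ⟨j, by simp⟩
    omega
  · have h1 : (Finset.univ.filter (fun k => L k < L i)) =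
        (Finset.univ.filter (fun k => L k < L j)) := by rw [he]
    have h2 : (Finset.univ.filter (fun k : Fin n => k ≤ i ∧ L k = L i)).card <
        (Finset.univ.filter (fun k : Fin n => k ≤ j ∧ L k = L j)).card := by
      apply Finset.card_lt_card
      rw [Finset.ssubset_iff_of_subset]
      · exact ⟨j, by simp, by simp [he]; omega⟩
      · intro k hk
        simp only [Finset.mem_filter, Finset.mem_univ, true_and] at hk ⊢
        exact ⟨le_trans hk.1 hij.le, he ▸ hk.2⟩
    rw [h1]
    exact Nat.add_lt_add_left h2 _

/-- For the LF-counting map `φ(i) = occ_<(L, L[i]) + rank(L, i, L[i])`,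
one has `φ(i) < φ(j)` iff `L[i] < L[j]`, or `L[i] = L[j]` and `i < j`. -/
theorem lf_formula_order {α : Type*} [LinearOrder α] {n : ℕ}
    (L : Fin n → α) (φ : Fin n → ℕ)
    (hφ : ∀ i, φ i =
      (Finset.univ.filter (fun j => L j < L i)).card +
      (Finset.univ.filter (fun j => j ≤ i ∧ L j = L i)).card)
    (i j : Fin n) :
    φ i < φ j ↔ (L i < L j ∨ (L i = L j ∧ i < j)) := by
  constructor
  · intro h
    by_contra hc
    push_neg at hc
    obtain ⟨h1, h2⟩ := hc
    rcases lt_trichotomy (L i) (L j) with hl | hl | hl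
    · exact absurd hl (not_lt.mpr h1)
    · rcases lt_trichotomy i j with hij | hij | hij
      · exact absurd hij (not_lt.mpr (h2 hl))
      · exact absurd h (by rw [hij]; exact lt_irrefl _)
      · exact absurd h (not_lt.mpr (lf_aux L φ hφ j i (Or.inr ⟨hl.symm, hij⟩)).le)
    · exact absurd h (not_lt.mpr (lf_aux L φ hφ j i (Or.inl hl)).le)
  · exact lf_aux L φ hφ i j
end

section
/- Replacing a single character of a string by another character changes the number of maximal equal-letter runs by at most 2 in absolute value: if S' is obtained from S by substituting one character, then |ρ(S') − ρ(S)| ≤ 2. -/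
/-- Number of maximal equal-letter runs of a list. -/
def runCount {α : Type*} [DecidableEq α] (l : List α) : ℕ :=
  (l.destutter (· ≠ ·)).length

/-- Count of adjacent unequal pairs in `a :: l`. -/
def uneqCount {α : Type*} [DecidableEq α] : α → List α → ℕ
  | _, [] => 0
  | a, b :: t => (if a = b then 0 else 1) + uneqCount b t

lemma destutter'_length {α : Type*} [DecidableEq α] (l : List α) : ∀ a : α,
    (List.destutter' (· ≠ ·) a l).length = 1 + uneqCount a l := by
  induction l with
  | nil => intro a; simp [List.destutter', uneqCount]
  | cons b t ih =>
    intro a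
    by_cases h : a = b
    · subst h
      simp [List.destutter', uneqCount, ih]
    · simp [List.destutter', uneqCount, h, ih]
      ring

lemma runCount_cons {α : Type*} [DecidableEq α] (a : α) (l : List α) :
    runCount (a :: l) = 1 + uneqCount a l := by
  simp [runCount, List.destutter, destutter'_length]

lemma uneqCount_diff_head {α : Type*} [DecidableEq α] (a b : α) (y : List α) :
    |(uneqCount a y : ℤ) - (uneqCount b y : ℤ)| ≤ 1 := by
  cases y with
  | nil => simp [uneqCount]
  | cons c t =>
    simp only [uneqCount]
    by_cases h1 : a = c <;> by_cases h2 : b = c <;> simp [h1, h2]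

lemma uneqCount_diff {α : Type*} [DecidableEq α] (x : List α) : ∀ (u a b : α) (y : List α),
    |(uneqCount u (x ++ a :: y) : ℤ) - (uneqCount u (x ++ b :: y) : ℤ)| ≤ 2 := by
  induction x with
  | nil =>
    intro u a b y
    simp only [List.nil_append, uneqCount]
    push_cast
    have h := uneqCount_diff_head a b y
    have : |(if u = a then (0:ℤ) else 1) - (if u = b then (0:ℤ) else 1)| ≤ 1 := by
      by_cases h1 : u = a <;> by_cases h2 : u = b <;> by_cases h3 : a = b <;>
        simp_all
    calc |((if u = a then (0:ℤ) else 1) + uneqCount a y)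
          - ((if u = b then (0:ℤ) else 1) + uneqCount b y)|
        ≤ |(if u = a then (0:ℤ) else 1) - (if u = b then (0:ℤ) else 1)|
          + |(uneqCount a y : ℤ) - uneqCount b y| := by
          rw [show ((if u = a then (0:ℤ) else 1) + uneqCount a y)
              - ((if u = b then (0:ℤ) else 1) + uneqCount b y)
              = ((if u = a then (0:ℤ) else 1) - (if u = b then (0:ℤ) else 1))
              + ((uneqCount a y : ℤ) - uneqCount b y) by ring]
          exact abs_add_le _ _
      _ ≤ 1 + 1 := add_le_add this h
      _ = 2 := by norm_num
  | cons v t ih =>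
    intro u a b y
    simp only [List.cons_append, uneqCount]
    push_cast
    have := ih v a b y
    calc |((if u = v then (0:ℤ) else 1) + uneqCount v (t ++ a :: y))
          - ((if u = v then (0:ℤ) else 1) + uneqCount v (t ++ b :: y))|
        = |(uneqCount v (t ++ a :: y) : ℤ) - uneqCount v (t ++ b :: y)| := by ring_nf
      _ ≤ 2 := this

lemma runCount_replace {α : Type*} [DecidableEq α] (x : List α) (a b : α) (y : List α) :
    |(runCount (x ++ a :: y) : ℤ) - (runCount (x ++ b :: y) : ℤ)| ≤ 2 := by
  cases x with
  | nil =>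
    simp only [List.nil_append, runCount_cons]
    push_cast
    have h := uneqCount_diff_head a b y
    calc |((1:ℤ) + uneqCount a y) - (1 + uneqCount b y)|
        = |(uneqCount a y : ℤ) - uneqCount b y| := by ring_nf
      _ ≤ 1 := h
      _ ≤ 2 := by norm_num
  | cons u t =>
    simp only [List.cons_append, runCount_cons]
    push_cast
    have h := uneqCount_diff t u a b y
    calc |((1:ℤ) + uneqCount u (t ++ a :: y)) - (1 + uneqCount u (t ++ b :: y))|
        = |(uneqCount u (t ++ a :: y) : ℤ) - uneqCount u (t ++ b :: y)| := by ring_nf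
      _ ≤ 2 := h

/-- Replacing one character of a string by another changes the number of
maximal equal-letter runs by at most 2 in absolute value. -/
theorem runCount_set {α : Type*} [DecidableEq α] (S : List α) (p : ℕ)
    (hp : p < S.length) (c : α) :
    |(runCount (S.set p c) : ℤ) - (runCount S : ℤ)| ≤ 2 := by
  have h1 : S.set p c = S.take p ++ c :: S.drop (p + 1) := by
    rw [List.set_eq_take_append_cons_drop, if_pos hp]
  have h2 : S = S.take p ++ S[p] :: S.drop (p + 1) := by
    conv_lhs => rw [← List.take_append_drop p S, List.drop_eq_getElem_cons hp]
  rw [h1]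
  nth_rewrite 3 [h2]
  exact runCount_replace _ c S[p] _
end

section
/- Let S be a string of length n ≥ 3 containing a character $ at an interior position p (1 < p < n) such that $ occurs nowhere else, and suppose the two neighbors satisfy S[p−1] = S[p+1] = c with c ≠ $. Let S' be the string obtained by replacing S[p] with c. Then ρ(S') = ρ(S) − 2, where ρ counts maximal equal-letter runs. -/
private lemma aux1 {α : Type*} [DecidableEq α] (c : α) (l : List α) :
    ∀ (A : List α) (a : α),
      ((A ++ c :: c :: l).destutter' (· ≠ ·) a).length
        = ((A ++ c :: l).destutter' (· ≠ ·) a).length := by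
  intro A
  induction A with
  | nil =>
    intro a
    by_cases h : a ≠ c
    · simp only [List.nil_append, List.destutter'_cons_pos _ h]
      rw [List.destutter'_cons_neg _ (by simp)]
    · simp only [List.nil_append, List.destutter'_cons_neg _ h]
  | cons b A ih =>
    intro a
    by_cases h : a ≠ b
    · simp only [List.cons_append, List.destutter'_cons_pos _ h, List.length_cons, ih]
    · simp only [List.cons_append, List.destutter'_cons_neg _ h, ih]

private lemma aux2 {α : Type*} [DecidableEq α] (c d : α) (hcd : c ≠ d) (l : List α) :
    ∀ (A : List α) (a : α),
      ((A ++ c :: d :: c :: l).destutter' (· ≠ ·) a).length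
        = ((A ++ c :: l).destutter' (· ≠ ·) a).length + 2 := by
  intro A
  induction A with
  | nil =>
    intro a
    by_cases h : a ≠ c
    · simp only [List.nil_append, List.destutter'_cons_pos _ h,
        List.destutter'_cons_pos _ hcd, List.destutter'_cons_pos _ (Ne.symm hcd),
        List.length_cons]
    · push_neg at h
      subst h
      simp only [List.nil_append, List.destutter'_cons_neg _ (by simp : ¬ a ≠ a)]
      rw [List.destutter'_cons_pos _ hcd, List.destutter'_cons_pos _ (Ne.symm hcd)]
      simp
  | cons b A ih =>
    intro a
    by_cases h : a ≠ b
    · simp only [List.cons_append, List.destutter'_cons_pos _ h, List.length_cons, ih]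
    · simp only [List.cons_append, List.destutter'_cons_neg _ h, ih]

private lemma run1 {α : Type*} [DecidableEq α] (c : α) (l A : List α) :
    runCount (A ++ c :: c :: l) = runCount (A ++ c :: l) := by
  cases A with
  | nil =>
    simp only [List.nil_append, runCount, List.destutter_cons']
    rw [List.destutter'_cons_neg _ (by simp : ¬ c ≠ c)]
  | cons b A =>
    simp only [runCount, List.cons_append, List.destutter_cons']
    exact aux1 c l A b

private lemma run2 {α : Type*} [DecidableEq α] (c d : α) (hcd : c ≠ d) (l A : List α) :
    runCount (A ++ c :: d :: c :: l) = runCount (A ++ c :: l) + 2 := by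
  cases A with
  | nil =>
    simp only [List.nil_append, runCount, List.destutter_cons']
    rw [List.destutter'_cons_pos _ hcd, List.destutter'_cons_pos _ (Ne.symm hcd)]
    simp
  | cons b A =>
    simp only [runCount, List.cons_append, List.destutter_cons']
    exact aux2 c d hcd l A b

/-- If a string `S` of length `n ≥ 3` contains a character `$` at an interior
position `p` (0-indexed: `0 < p` and `p + 1 < n`) occurring nowhere else, and its two
neighbors equal `c ≠ $`, then replacing `S[p]` by `c` decreases the number of maximal
runs by exactly 2: `ρ(S') = ρ(S) − 2`. -/
theorem runCount_replace_merges {α : Type*} [DecidableEq α] (S : List α)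
    (hn : 3 ≤ S.length) (p : ℕ) (hp0 : 0 < p) (hpn : p + 1 < S.length)
    (dollar c : α)
    (hSp : S[p]'(by omega) = dollar)
    (huniq : ∀ j (hj : j < S.length), S[j]'hj = dollar → j = p)
    (hleft : S[p - 1]'(by omega) = c)
    (hright : S[p + 1]'hpn = c)
    (hc : c ≠ dollar) :
    runCount (S.set p c) + 2 = runCount S := by
  set A := S.take (p - 1) with hA
  set B := S.drop (p + 2) with hB
  have h1 : p - 1 < S.length := by omega
  have h2 : p < S.length := by omega
  have hp1 : p - 1 + 1 = p := by omega
  have hd1 : S.drop (p - 1) = c :: S.drop p := by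
    rw [List.drop_eq_getElem_cons h1, hleft, hp1]
  have hd2 : S.drop p = dollar :: S.drop (p + 1) := by
    rw [List.drop_eq_getElem_cons h2, hSp]
  have hd3 : S.drop (p + 1) = c :: B := by
    rw [List.drop_eq_getElem_cons hpn, hright, hB]
  have hS : S = A ++ c :: dollar :: c :: B := by
    conv_lhs => rw [← List.take_append_drop (p - 1) S]
    rw [hd1, hd2, hd3]
  have hset : S.set p c = A ++ c :: c :: c :: B := by
    rw [hS]
    have hlen : A.length = p - 1 := by
      rw [hA, List.length_take]
      exact Nat.min_eq_left (by omega)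
    have : p = A.length + 1 := by omega
    rw [this, List.set_append_right _ _ (by omega)]
    simp [Nat.add_sub_cancel_left]
  rw [hset, run1 c (c :: B) A, run1 c B A, hS, run2 c dollar (Ne.symm (fun h => hc h.symm)) B A]
end

section
/- Let n = m² for a natural number m ≥ 1, and suppose the string aⁿ (the character a repeated n times) is written as a concatenation s_{p(1)} s_{p(2)} ⋯ s_{p(k')} of k' strings drawn from a finite dictionary s₁, ..., s_k of nonempty strings with total length s = Σᵢ |sᵢ|. Then k' + s ≥ 2m = 2√n. -/
theorem Nat.two_mul_le_add_of_sq_le_mul {m a b : ℕ} (h : m ^ 2 ≤ a * b) : 2 * m ≤ a + b := by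
  by_contra! hlt
  nlinarith [sq_nonneg ((a : ℤ) - b)]

theorem Finset.sum_comp_le_card_mul_sum {β ι : Type*} [Fintype β] [Fintype ι]
    (f : ι → ℕ) (p : β → ι) : ∑ b, f (p b) ≤ Fintype.card β * ∑ i, f i := by
  simpa using Finset.sum_le_card_nsmul Finset.univ (fun b => f (p b)) (∑ i, f i)
    fun b _ => Finset.single_le_sum (fun i _ => Nat.zero_le (f i)) (Finset.mem_univ (p b))

theorem pfp_lower_bound_general {α : Type*} (a : α) (m k k' : ℕ)
    (s : Fin k → List α)
    (p : Fin k' → Fin k)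
    (hcat : (List.ofFn (fun i => s (p i))).flatten = List.replicate (m ^ 2) a) :
    2 * m ≤ k' + ∑ i, (s i).length := by
  have hlen : ∑ i, (s (p i)).length = m ^ 2 := by
    simpa [List.length_flatten, List.sum_ofFn] using congrArg List.length hcat
  apply Nat.two_mul_le_add_of_sq_le_mul
  simpa [hlen] using Finset.sum_comp_le_card_mul_sum (fun i => (s i).length) p

/-- If the string `aⁿ` with `n = m²` (`m ≥ 1`) is a concatenation of `k'`
strings selected (via `p`) from a dictionary of `k` nonempty strings of total length
`s = Σᵢ |sᵢ|`, then `k' + s ≥ 2m = 2√n`. -/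
theorem pfp_lower_bound {α : Type*} (a : α) (m k k' : ℕ) (hm : 1 ≤ m)
    (s : Fin k → List α) (hs : ∀ i, s i ≠ [])
    (p : Fin k' → Fin k)
    (hcat : (List.ofFn (fun i => s (p i))).flatten = List.replicate (m ^ 2) a) :
    2 * m ≤ k' + ∑ i, (s i).length :=
  pfp_lower_bound_general a m k k' s p hcat
end

section
/- Let T be a string of length n ≥ 2 over a linearly ordered alphabet whose last character $ is strictly smaller than every other character of T and occurs only at the last position. Let SA be the permutation of {1,...,n} sorting the suffixes of T lexicographically (T[SA(1)..n] ≺ ⋯ ≺ T[SA(n)..n]), define the BWT by L[i] = T[SA(i) − 1] when SA(i) > 1 and L[i] = T[n] when SA(i) = 1, and define LF(i) = SA⁻¹(SA(i) − 1) when SA(i) > 1 and LF(i) = SA⁻¹(n) when SA(i) = 1. Then for every i, LF(i) = occ_<(L, L[i]) + rank(L, i, L[i]). -/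
/-- Classical LF formula.  Let `T` be a string of length `n ≥ 2` whose last
character is strictly smaller than every other character (hence unique).  Let `SA` be the
permutation sorting the suffixes lexicographically, `L` the BWT (`L[i]` is the character
cyclically preceding suffix `SA i`), and `LF(i) = SA⁻¹(SA(i) − 1)` (cyclically).  Then
for every `i`, the 1-indexed value of `LF i` equals
`occ_<(L, L[i]) + rank(L, i, L[i])`. -/
theorem lf_eq_counting {α : Type*} [LinearOrder α] (T : List α)
    (hn : 2 ≤ T.length) (hne : T ≠ [])
    (hsmall : ∀ i : Fin T.length, (i : ℕ) < T.length - 1 → T.getLast hne < T.get i)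
    (SA : Equiv.Perm (Fin T.length))
    (hSA : ∀ i j : Fin T.length, i < j → T.drop (SA i : ℕ) < T.drop (SA j : ℕ))
    (L : Fin T.length → α)
    (hL : ∀ i, L i = if (SA i : ℕ) = 0 then T.getLast hne
      else T.get ⟨(SA i : ℕ) - 1, by have := (SA i).isLt; omega⟩)
    (LF : Fin T.length → Fin T.length)
    (hLF : ∀ i, LF i = if (SA i : ℕ) = 0
      then SA.symm ⟨T.length - 1, by omega⟩
      else SA.symm ⟨(SA i : ℕ) - 1, by have := (SA i).isLt; omega⟩) :
    ∀ i, (LF i : ℕ) + 1 =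
      (Finset.univ.filter (fun j => L j < L i)).card +
      (Finset.univ.filter (fun j => j ≤ i ∧ L j = L i)).card := by
  have hgetLast : T.getLast hne = T.get ⟨T.length - 1, by omega⟩ := by
    rw [List.getLast_eq_getElem]; simp [List.get_eq_getElem]
  have hdrop : ∀ p : Fin T.length, T.drop (p : ℕ) = T.get p :: T.drop ((p : ℕ) + 1) := by
    intro p
    rw [List.drop_eq_getElem_cons p.isLt]
    simp [List.get_eq_getElem]
  -- uniform description of the suffix starting at the cyclic predecessor
  have key : ∀ k : Fin T.length, T.drop ((SA (LF k)) : ℕ) =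
      L k :: (if (SA k : ℕ) = 0 then ([] : List α) else T.drop (SA k : ℕ)) := by
    intro k
    rw [hLF k]
    by_cases h0 : (SA k : ℕ) = 0
    · rw [if_pos h0, Equiv.apply_symm_apply, if_pos h0]
      rw [hdrop ⟨T.length - 1, by omega⟩]
      have h1 : (T.length - 1) + 1 = T.length := by omega
      have h2 : T.drop ((((⟨T.length - 1, by omega⟩ : Fin T.length)) : ℕ) + 1) = [] := by
        simp only [Fin.val_mk, h1, List.drop_length]
      rw [h2, hL k, if_pos h0, hgetLast]
    · rw [if_neg h0, Equiv.apply_symm_apply, if_neg h0]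
      have hlt : (SA k : ℕ) - 1 < T.length := by have := (SA k).isLt; omega
      rw [hdrop ⟨(SA k : ℕ) - 1, hlt⟩]
      have h1 : ((SA k : ℕ) - 1) + 1 = (SA k : ℕ) := by omega
      rw [hL k, if_neg h0]
      simp only [Fin.val_mk, h1]
  -- strict monotonicity of LF with respect to the (L-value, index) lexicographic order
  have mono : ∀ j k : Fin T.length, (L j < L k ∨ (L j = L k ∧ j < k)) → LF j < LF k := by
    intro j k hjk
    have hlex : T.drop ((SA (LF j)) : ℕ) < T.drop ((SA (LF k)) : ℕ) := by
      rw [key j, key k]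
      show List.Lex (· < ·) _ _
      rcases hjk with h | ⟨heq, hlt⟩
      · exact List.Lex.rel h
      · rw [heq]
        apply List.Lex.cons
        by_cases h0j : (SA j : ℕ) = 0
        · by_cases h0k : (SA k : ℕ) = 0
          · exfalso
            have : SA j = SA k := Fin.ext (by omega)
            exact absurd (SA.injective this) (ne_of_lt hlt)
          · rw [if_pos h0j, if_neg h0k, hdrop (SA k)]
            exact List.Lex.nil
        · by_cases h0k : (SA k : ℕ) = 0
          · exfalso
            have h1 : L k = T.getLast hne := by rw [hL k, if_pos h0k]
            have hlt' : (SA j : ℕ) - 1 < T.length := by have := (SA j).isLt; omega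
            have h2 : L j = T.get ⟨(SA j : ℕ) - 1, hlt'⟩ := by rw [hL j, if_neg h0j]
            have h3 := hsmall ⟨(SA j : ℕ) - 1, hlt'⟩
              (by simp only [Fin.val_mk]; have := (SA j).isLt; omega)
            rw [← h2, heq, h1] at h3
            exact lt_irrefl _ h3
          · rw [if_neg h0j, if_neg h0k]
            exact hSA j k hlt
    rcases lt_trichotomy (LF j) (LF k) with h | h | h
    · exact h
    · exfalso; rw [h] at hlex; exact lt_irrefl _ hlex
    · exact absurd (hSA _ _ h) (lt_asymm hlex)
  have total : ∀ j k : Fin T.length, j ≠ k →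
      (L j < L k ∨ (L j = L k ∧ j < k)) ∨ (L k < L j ∨ (L k = L j ∧ k < j)) := by
    intro j k hjk
    rcases lt_trichotomy (L j) (L k) with h | h | h
    · exact Or.inl (Or.inl h)
    · rcases lt_trichotomy j k with h' | h' | h'
      · exact Or.inl (Or.inr ⟨h, h'⟩)
      · exact absurd h' hjk
      · exact Or.inr (Or.inr ⟨h.symm, h'⟩)
    · exact Or.inr (Or.inl h)
  have hinj : Function.Injective LF := by
    intro j k h
    by_contra hjk
    rcases total j k hjk with h' | h'
    · exact absurd h (ne_of_lt (mono _ _ h'))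
    · exact absurd h.symm (ne_of_lt (mono _ _ h'))
  have hbij : Function.Bijective LF := Finite.injective_iff_bijective.mp hinj
  intro i
  have hiff : ∀ k, ((L k < L i) ∨ (k ≤ i ∧ L k = L i)) ↔ LF k ≤ LF i := by
    intro k
    constructor
    · rintro (h | ⟨hle, heq⟩)
      · exact le_of_lt (mono _ _ (Or.inl h))
      · rcases eq_or_lt_of_le hle with rfl | h'
        · exact le_refl _
        · exact le_of_lt (mono _ _ (Or.inr ⟨heq, h'⟩))
    · intro h
      by_contra hc
      push_neg at hc
      obtain ⟨h1, h2⟩ := hc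
      rcases lt_trichotomy (L i) (L k) with h' | h' | h'
      · exact absurd h (not_le.mpr (mono _ _ (Or.inl h')))
      · have hki : i < k := by
          rcases lt_or_ge i k with h'' | h''
          · exact h''
          · exact absurd h'.symm (h2 h'')
        exact absurd h (not_le.mpr (mono _ _ (Or.inr ⟨h', hki⟩)))
      · exact absurd h' (not_lt.mpr h1)
  have c3 : Finset.univ.filter (fun k : Fin T.length => (L k < L i) ∨ (k ≤ i ∧ L k = L i))
      = Finset.univ.filter (fun k => LF k ≤ LF i) := by
    ext k
    simp only [Finset.mem_filter, Finset.mem_univ, true_and]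
    exact hiff k
  have c1 : (Finset.univ.filter (fun k => LF k ≤ LF i)).card
      = (Finset.univ.filter (fun m => m ≤ LF i)).card := by
    apply Finset.card_bij (fun k _ => LF k)
    · intro a ha
      simp only [Finset.mem_filter, Finset.mem_univ, true_and] at ha ⊢
      exact ha
    · intro a _ b _ h
      exact hinj h
    · intro m hm
      obtain ⟨k, rfl⟩ := hbij.2 m
      simp only [Finset.mem_filter, Finset.mem_univ, true_and] at hm
      exact ⟨k, by simp [hm], rfl⟩
  have c2 : (Finset.univ.filter (fun m => m ≤ LF i)).card = (LF i : ℕ) + 1 := by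
    have : Finset.univ.filter (fun m => m ≤ LF i) = Finset.Iic (LF i) := by
      ext m; simp
    rw [this, Fin.card_Iic]
  have c4 : (Finset.univ.filter (fun k : Fin T.length => (L k < L i) ∨ (k ≤ i ∧ L k = L i))).card
      = (Finset.univ.filter (fun j => L j < L i)).card +
        (Finset.univ.filter (fun j => j ≤ i ∧ L j = L i)).card := by
    rw [Finset.filter_or, Finset.card_union_of_disjoint]
    rw [Finset.disjoint_left]
    intro a ha hb
    simp only [Finset.mem_filter, Finset.mem_univ, true_and] at ha hb
    exact absurd hb.2 (ne_of_lt ha)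
  rw [← c4, c3, c1, c2]
end

section
/- Let T_δ be a string of length δ ≥ 1 ending with a unique smallest character $, let L_δ be its BWT with rep the position of $ in L_δ (L_δ[rep] = $), and let c be a character with $ < c. Form T_{δ+1} = c·T_δ' where T_δ' is T_δ with $ removed from the end and re-appended (i.e., T_{δ+1} is obtained by prepending c before T_δ's content, keeping $ last). Then the BWT L_{δ+1} of T_{δ+1} is obtained from L_δ by replacing the character $ at position rep with c and then inserting $ at position ins = occ_<(L_δ, c) + rank(L_δ, rep, c) + 1. -/
/-!
The suffixes of `c :: T` are those of `T`, each at its index shifted by one, together with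
`c :: T` itself at index `0`. Hence the suffix array of `c :: T` is that of `T` with every
index incremented and `0` inserted at position `k`, the number of suffixes of `T` smaller than
`c :: T`. Reading off cyclically preceding characters, the shifted index of the old suffix `0`
(the row of `$`) now yields `c`, and the new row `0` yields `$`.

Comparing first characters, `T[i..] < c :: T` iff `T[i] < c`, or `T[i] = c` and
`T[i+1..] < T`. Counted by the row of `T[i+1..]`, the first alternative gives the occurrences
of characters `< c` in `bwt T`, and the second the occurrences of `c` in the rows sorting
before `T` itself, i.e. above the row of `$`.
-/

/-- The Burrows–Wheeler transform of a list: sort the suffix starting positions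
lexicographically, and take the cyclically preceding character of each. -/
def bwt {α : Type*} [LinearOrder α] [Inhabited α] (T : List α) : List α :=
  ((List.range T.length).mergeSort (fun i j => decide (T.drop i ≤ T.drop j))).map
    (fun i => T.getD ((i + T.length - 1) % T.length) default)

namespace List

theorem countP_or_of_forall_not_and {α : Type*} {p q : α → Bool} {l : List α}
    (h : ∀ a ∈ l, ¬(p a ∧ q a)) :
    l.countP (fun a => p a || q a) = l.countP p + l.countP q := by
  induction l with
  | nil => rfl
  | cons a t ih =>
    have ha := h a mem_cons_self
    simp only [countP_cons, ih fun b hb => h b (mem_cons_of_mem a hb)]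
    cases hp : p a <;> cases hq : q a <;> simp_all <;> omega

theorem map_pred_mod_range_perm (n : ℕ) :
    (range n).map (fun i => (i + n - 1) % n) ~ range n := by
  have hrot : (range n).map (fun i => (i + n - 1) % n) = (range n).rotate (n - 1) := by
    refine ext_getElem (by simp) fun k h₁ _ => ?_
    simp only [getElem_map, getElem_range, getElem_rotate, length_range]
    congr 1
    grind
  exact hrot ▸ rotate_perm _ _

theorem eq_of_drop_eq_drop {α : Type*} {l : List α} {i j : ℕ} (hi : i ≤ l.length)
    (hj : j ≤ l.length) (h : l.drop i = l.drop j) : i = j := by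
  have := congrArg length h
  simp only [length_drop] at this
  omega

section SortedByKey

variable {ι β : Type*} [LinearOrder β] {key : ι → β}

theorem Pairwise.filter_lt_getElem {l : List ι} (hl : l.Pairwise (key · < key ·))
    (m : ℕ) (hm : m < l.length) : l.filter (fun y => key y < key l[m]) = l.take m := by
  induction l generalizing m with
  | nil => simp at hm
  | cons a t ih =>
    obtain ⟨ha, ht⟩ := pairwise_cons.mp hl
    cases m with
    | zero =>
      simpa using fun y hy => (ha y hy).le
    | succ m =>
      have hm' : m < t.length := by simpa using hm
      simp [ha _ (getElem_mem hm'), ih ht m hm']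

theorem Pairwise.insertIdx_countP_lt {l : List ι} (hl : l.Pairwise (key · < key ·)) {x : ι}
    (hx : ∀ y ∈ l, key y ≠ key x) :
    (l.insertIdx (l.countP (fun y => key y < key x)) x).Pairwise (key · < key ·) := by
  induction l with
  | nil => simp
  | cons a t ih =>
    obtain ⟨ha, ht⟩ := pairwise_cons.mp hl
    rcases (hx a mem_cons_self).lt_or_gt with hax | hxa
    · rw [countP_cons_of_pos (by simpa using hax), insertIdx_succ_cons, pairwise_cons]
      refine ⟨fun y hy => ?_, ih ht fun y hy => hx y (mem_cons_of_mem a hy)⟩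
      rcases mem_cons.mp ((perm_insertIdx x t countP_le_length).mem_iff.mp hy) with rfl | hy
      · exact hax
      · exact ha y hy
    · have hzero : (a :: t).countP (fun y => key y < key x) = 0 :=
        countP_eq_zero.mpr fun y hy => by
          rcases mem_cons.mp hy with rfl | hy
          · simpa using hxa.le
          · simpa using (hxa.trans (ha y hy)).le
      rw [hzero, insertIdx_zero, pairwise_cons]
      refine ⟨fun y hy => ?_, hl⟩
      rcases mem_cons.mp hy with rfl | hy
      · exact hxa
      · exact hxa.trans (ha y hy)

end SortedByKey
end List

open List

section SuffixArray

variable {α : Type*} [LinearOrder α]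

def suffixArray (T : List α) : List ℕ :=
  (range T.length).mergeSort (fun i j => decide (T.drop i ≤ T.drop j))

theorem suffixArray_perm (T : List α) : suffixArray T ~ range T.length :=
  mergeSort_perm _ _

theorem suffixArray_nodup (T : List α) : (suffixArray T).Nodup :=
  (suffixArray_perm T).nodup_iff.mpr nodup_range

theorem lt_length_of_mem_suffixArray {T : List α} {i : ℕ} (hi : i ∈ suffixArray T) :
    i < T.length :=
  mem_range.mp ((suffixArray_perm T).subset hi)

theorem suffixArray_pairwise (T : List α) :
    (suffixArray T).Pairwise (fun i j => T.drop i < T.drop j) := by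
  have hle : (suffixArray T).Pairwise (fun i j => T.drop i ≤ T.drop j) := by
    simpa [suffixArray] using
      pairwise_mergeSort (le := fun i j => decide (T.drop i ≤ T.drop j))
        (fun _ _ _ h₁ h₂ =>
          decide_eq_true ((of_decide_eq_true h₁).trans (of_decide_eq_true h₂)))
        (fun i j => by simpa using le_total (T.drop i) (T.drop j)) (range T.length)
  refine (hle.and (suffixArray_nodup T)).imp_of_mem fun hi hj ⟨hij, hne⟩ =>
    hij.lt_of_ne fun h => hne ?_
  exact eq_of_drop_eq_drop (lt_length_of_mem_suffixArray hi).le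
    (lt_length_of_mem_suffixArray hj).le h

theorem eq_suffixArray {T : List α} {l : List ℕ} (hperm : l ~ range T.length)
    (hl : l.Pairwise (fun i j => T.drop i < T.drop j)) : l = suffixArray T :=
  hperm.trans (suffixArray_perm T).symm |>.eq_of_pairwise
    (fun _ _ _ _ h₁ h₂ => absurd (h₁.trans h₂) (lt_irrefl _)) hl (suffixArray_pairwise T)

theorem suffixArray_cons (c : α) (T : List α) :
    suffixArray (c :: T) = ((suffixArray T).map (· + 1)).insertIdx
      ((suffixArray T).countP fun i => T.drop i < c :: T) 0 := by
  set s := suffixArray T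
  have hcount : (s.map (· + 1)).countP (fun i => (c :: T).drop i < (c :: T).drop 0) =
      s.countP fun i => T.drop i < c :: T := by
    simp only [countP_map]; rfl
  refine (eq_suffixArray ?_ ?_).symm
  · calc ((s.map (· + 1)).insertIdx _ 0) ~ 0 :: s.map (· + 1) :=
          perm_insertIdx _ _ (by simpa using countP_le_length)
      _ ~ 0 :: (range T.length).map (· + 1) := ((suffixArray_perm T).map _).cons 0
      _ = range (c :: T).length := range_succ_eq_map.symm
  · rw [← hcount]
    -- `convert` reconciles the `Decidable` instance of `List.lt` with that of the linear order
    convert Pairwise.insertIdx_countP_lt (key := (c :: T).drop) (x := 0)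
      ((suffixArray_pairwise T).map (· + 1) fun _ _ h => h) ?_
    rw [forall_mem_map]
    intro i hi h
    have hi : i + 1 ≤ (c :: T).length := by simpa using (lt_length_of_mem_suffixArray hi).le
    exact Nat.succ_ne_zero i (eq_of_drop_eq_drop hi (Nat.zero_le _) h)

end SuffixArray

section BWTChar

variable {α : Type*} [Inhabited α]

def bwtChar (T : List α) (i : ℕ) : α :=
  T.getD ((i + T.length - 1) % T.length) default

theorem bwtChar_zero {T : List α} (hne : T ≠ []) : bwtChar T 0 = T.getLast hne := by
  have hlen : 0 < T.length := length_pos_iff.mpr hne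
  rw [bwtChar, zero_add, Nat.mod_eq_of_lt (by omega), getD_eq_getElem, getLast_eq_getElem]

theorem bwtChar_succ {T : List α} {i : ℕ} (hi : i < T.length) : bwtChar T (i + 1) = T[i] := by
  rw [bwtChar, show i + 1 + T.length - 1 = i + T.length by omega, Nat.add_mod_right,
    Nat.mod_eq_of_lt hi, getD_eq_getElem]

theorem bwtChar_cons_succ (c : α) {T : List α} {i : ℕ} (hi : i < T.length) :
    bwtChar (c :: T) (i + 1) = Function.update (bwtChar T) 0 c i := by
  rw [bwtChar_succ (by simpa using hi.trans (Nat.lt_succ_self _))]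
  cases i with
  | zero => simp
  | succ i => simp [bwtChar_succ (Nat.lt_of_succ_lt hi)]

theorem eq_zero_of_bwtChar_eq_getLast {T : List α} (hne : T ≠ [])
    (huniq : ∀ i (hi : i + 1 < T.length), T[i] ≠ T.getLast hne) {j : ℕ} (hj : j < T.length)
    (h : bwtChar T j = T.getLast hne) : j = 0 := by
  cases j with
  | zero => rfl
  | succ i => exact absurd (bwtChar_succ (Nat.lt_of_succ_lt hj) ▸ h) (huniq i hj)

end BWTChar

section BWT

variable {α : Type*} [LinearOrder α] [Inhabited α]

theorem bwt_eq_map_bwtChar (T : List α) : bwt T = (suffixArray T).map (bwtChar T) := rfl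

theorem map_bwtChar_cons_suffixArray (c : α) {T : List α} {rep : ℕ}
    (hrep : rep < (suffixArray T).length) (h0 : (suffixArray T)[rep] = 0) :
    ((suffixArray T).map (· + 1)).map (bwtChar (c :: T)) = (bwt T).set rep c := by
  have hnodup := suffixArray_nodup T
  calc _ = (suffixArray T).map (Function.update (bwtChar T) 0 c) := by
        rw [map_map]
        exact map_congr_left fun i hi => bwtChar_cons_succ c (lt_length_of_mem_suffixArray hi)
    _ = (bwt T).set rep c := by
        rw [hnodup.map_update, if_pos (h0 ▸ getElem_mem hrep), ← h0, hnodup.idxOf_getElem]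
        rfl

theorem countP_suffixArray_drop_lt_cons {T : List α} (hne : T ≠ []) {c : α}
    (hc : T.getLast hne < c) :
    (suffixArray T).countP (fun i => T.drop i < c :: T) =
      (suffixArray T).countP fun j => bwtChar T j < c || (bwtChar T j = c && T.drop j < T) := by
  have hn : 0 < T.length := length_pos_iff.mpr hne
  rw [(suffixArray_perm T).countP_eq, (suffixArray_perm T).countP_eq,
    ← (map_pred_mod_range_perm T.length).countP_eq, countP_map]
  refine countP_congr fun j hj => ?_
  have hj := mem_range.mp hj
  cases j with
  | zero =>
    rw [Function.comp_apply, zero_add, Nat.mod_eq_of_lt (by omega), drop_length_sub_one hne,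
      bwtChar_zero hne]
    simp [cons_lt_cons_iff, hc]
  | succ i =>
    rw [Function.comp_apply, show i + 1 + T.length - 1 = i + T.length by omega,
      Nat.add_mod_right, Nat.mod_eq_of_lt (by omega), drop_eq_getElem_cons (by omega),
      bwtChar_succ (by omega)]
    simp only [Bool.or_eq_true, Bool.and_eq_true, decide_eq_true_eq]
    exact cons_lt_cons_iff

theorem countP_suffixArray_eq_and_drop_lt {T : List α} {c : α} {rep : ℕ}
    (hrep : rep < (suffixArray T).length) (h0 : (suffixArray T)[rep] = 0) :
    (suffixArray T).countP (fun j => bwtChar T j = c && T.drop j < T) =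
      ((bwt T).take rep).count c := by
  have hprefix := (suffixArray_pairwise T).filter_lt_getElem rep hrep
  rw [h0, drop_zero] at hprefix
  rw [bwt_eq_map_bwtChar, ← map_take, ← hprefix, count_eq_countP, countP_map, countP_filter]
  exact countP_congr fun j _ => by simp

theorem countP_suffixArray_drop_lt_cons_eq {T : List α} (hne : T ≠ []) {c : α}
    (hc : T.getLast hne < c) {rep : ℕ} (hrep : rep < (suffixArray T).length)
    (h0 : (suffixArray T)[rep] = 0) :
    (suffixArray T).countP (fun i => T.drop i < c :: T) =
      (bwt T).countP (· < c) + ((bwt T).take (rep + 1)).count c := by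
  have hrep' : rep < (bwt T).length := by simpa [bwt_eq_map_bwtChar] using hrep
  have hdollar : (bwt T)[rep] = T.getLast hne := by
    simp [bwt_eq_map_bwtChar, h0, bwtChar_zero hne]
  rw [countP_suffixArray_drop_lt_cons hne hc, countP_or_of_forall_not_and,
    countP_suffixArray_eq_and_drop_lt hrep h0, take_add_one, count_append,
    getElem?_eq_getElem hrep', hdollar, bwt_eq_map_bwtChar, countP_map]
  · simp [hc.ne, Function.comp_def]
  · simp only [decide_eq_true_eq, Bool.and_eq_true]
    exact fun j _ ⟨hlt, heq, _⟩ => hlt.ne heq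

end BWT

/-- Online left-extension of the BWT.  Let `T` end with a unique smallest
character `$` (`T.getLast`), let `rep` be the (0-indexed) position of `$` in `bwt T`, and
let `c > $`.  Then the BWT of `c :: T` is obtained from `bwt T` by replacing position
`rep` with `c` and inserting `$` at (0-indexed) position
`occ_<(bwt T, c) + rank(bwt T, rep, c)` (i.e. 1-indexed position
`occ_<(L_δ, c) + rank(L_δ, rep, c) + 1`). -/
theorem bwt_extension {α : Type*} [LinearOrder α] [Inhabited α] (T : List α)
    (hne : T ≠ [])
    (hsmall : ∀ i : Fin T.length, (i : ℕ) < T.length - 1 → T.getLast hne < T.get i)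
    (c : α) (hc : T.getLast hne < c)
    (rep : ℕ) (hrep : rep < (bwt T).length)
    (hrepc : (bwt T)[rep]'hrep = T.getLast hne) :
    bwt (c :: T) =
      ((bwt T).set rep c).insertIdx
        (((bwt T).countP (fun x => decide (x < c))) + (((bwt T).take (rep + 1)).count c))
        (T.getLast hne) := by
  have huniq : ∀ i (hi : i + 1 < T.length), T[i] ≠ T.getLast hne := fun i hi =>
    (hsmall ⟨i, by omega⟩ (Nat.lt_sub_of_add_lt hi)).ne'
  have hrep' : rep < (suffixArray T).length := by simpa [bwt_eq_map_bwtChar] using hrep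
  have h0 : (suffixArray T)[rep] = 0 := by
    refine eq_zero_of_bwtChar_eq_getLast hne huniq
      (lt_length_of_mem_suffixArray (getElem_mem hrep')) ?_
    simpa [bwt_eq_map_bwtChar] using hrepc
  rw [bwt_eq_map_bwtChar, suffixArray_cons, map_insertIdx,
    map_bwtChar_cons_suffixArray c hrep' h0, bwtChar_zero (cons_ne_nil c T), getLast_cons hne,
    countP_suffixArray_drop_lt_cons_eq hne hc hrep' h0]
end

section
/- Let L be a string of length n with exactly r maximal equal-letter runs, containing a character $ at position p with 1 ≤ p ≤ n such that $ occurs nowhere else, and let c ≠ $ be a character with L[p−1] ≠ c (if p > 1) and L[p+1] ≠ c (if p < n). Let L' be obtained from L by replacing L[p] with c and then inserting $ at an arbitrary position. Then L' has at least r + 1 maximal runs. -/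
/-!
Write `L = A ++ $ :: B`. Both `$` (being unique) and `c` differ from the last letter of `A` and
the first letter of `B`, so `A ++ $ :: B` and `A ++ c :: B` both have
`runCount A + 1 + runCount B` runs. Inserting a letter that does not occur in a list splits it
into two pieces, whose run counts add up to at least that of the list, and puts a run of its own
between them.
-/

namespace List

theorem insertIdx_eq_take_append_cons_drop {α : Type*} {l : List α} {q : ℕ} (x : α)
    (hq : q ≤ l.length) : l.insertIdx q x = l.take q ++ x :: l.drop q := by
  have := modifyTailIdx_add (cons x) 0 (l.take q) (l.drop q)
  rwa [take_append_drop, length_take_of_le hq, Nat.add_zero] at this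

end List

open List

section runCount

variable {α : Type*} [DecidableEq α]

@[simp]
theorem runCount_nil : runCount ([] : List α) = 0 := rfl

@[simp]
theorem runCount_singleton (a : α) : runCount [a] = 1 := rfl

theorem runCount_cons_of_head?_ne {a : α} {l : List α} (h : l.head? ≠ some a) :
    runCount (a :: l) = runCount l + 1 := by
  cases l with
  | nil => rfl
  | cons b l =>
    have hab : a ≠ b := fun hab => h (by simp [hab])
    simp [runCount, destutter_cons', hab]

theorem runCount_cons_cons_self (a : α) (l : List α) :
    runCount (a :: a :: l) = runCount (a :: l) := by
  simp [runCount, destutter_cons']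

theorem runCount_cons_le (a : α) (l : List α) : runCount (a :: l) ≤ runCount l + 1 := by
  by_cases h : l.head? = some a
  · obtain ⟨l, rfl⟩ : ∃ l', l = a :: l' := by simpa [head?_eq_some_iff] using h
    rw [runCount_cons_cons_self]
    exact Nat.le_succ _
  · exact (runCount_cons_of_head?_ne h).le

theorem runCount_append_le (A B : List α) : runCount (A ++ B) ≤ runCount A + runCount B := by
  induction A with
  | nil => simp
  | cons a A ih =>
    cases A with
    | nil => simpa [Nat.add_comm] using runCount_cons_le a B
    | cons b A =>
      by_cases hab : b = a
      · subst hab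
        simpa only [cons_append, runCount_cons_cons_self] using ih
      · have hne : ∀ l : List α, (b :: l).head? ≠ some a := by simpa using hab
        simp only [cons_append, runCount_cons_of_head?_ne (hne _)] at ih ⊢
        omega

theorem runCount_append_of_getLast?_ne_head? {A B : List α}
    (h : ∀ a, A.getLast? = some a → B.head? ≠ some a) :
    runCount (A ++ B) = runCount A + runCount B := by
  induction A with
  | nil => simp
  | cons a A ih =>
    cases A with
    | nil => simpa [Nat.add_comm] using runCount_cons_of_head?_ne (h a rfl)
    | cons b A =>
      have ih := ih fun x hx => h x (by simpa using hx)
      by_cases hab : b = a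
      · subst hab
        simpa only [cons_append, runCount_cons_cons_self] using ih
      · have hne : ∀ l : List α, (b :: l).head? ≠ some a := by simpa using hab
        simp only [cons_append, runCount_cons_of_head?_ne (hne _)] at ih ⊢
        omega

theorem runCount_append_cons {A B : List α} {x : α} (hA : A.getLast? ≠ some x)
    (hB : B.head? ≠ some x) : runCount (A ++ x :: B) = runCount A + runCount B + 1 := by
  rw [runCount_append_of_getLast?_ne_head? fun a ha hxa => hA (by simp_all),
    runCount_cons_of_head?_ne hB, Nat.add_assoc]

theorem runCount_add_one_le_insertIdx {l : List α} {x : α} (hx : x ∉ l) {q : ℕ}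
    (hq : q ≤ l.length) : runCount l + 1 ≤ runCount (l.insertIdx q x) := by
  rw [insertIdx_eq_take_append_cons_drop x hq, runCount_append_cons]
  · have := runCount_append_le (l.take q) (l.drop q)
    rw [take_append_drop] at this
    omega
  · exact fun h => hx (mem_of_mem_take (mem_of_getLast? h))
  · exact fun h => hx (mem_of_mem_drop (mem_of_head? h))

theorem runCount_add_one_le_insertIdx_of_replace {A B : List α} {x c : α} (hxA : x ∉ A)
    (hxB : x ∉ B) (hc : c ≠ x) (hcA : A.getLast? ≠ some c) (hcB : B.head? ≠ some c)
    {q : ℕ} (hq : q ≤ (A ++ c :: B).length) :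
    runCount (A ++ x :: B) + 1 ≤ runCount ((A ++ c :: B).insertIdx q x) := by
  have hxA' : A.getLast? ≠ some x := fun h => hxA (mem_of_getLast? h)
  have hxB' : B.head? ≠ some x := fun h => hxB (mem_of_head? h)
  rw [runCount_append_cons hxA' hxB', ← runCount_append_cons hcA hcB]
  exact runCount_add_one_le_insertIdx (by simp [hxA, hxB, hc.symm]) hq

end runCount

/-- Let `L` have exactly `r` maximal runs and contain a unique character
`$` at position `p`, and let `c ≠ $` differ from both neighbors of `$` (when they
exist).  If `L'` is obtained by replacing `L[p]` with `c` and then inserting `$` at an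
arbitrary position, then `L'` has at least `r + 1` maximal runs. -/
theorem runCount_update_increases {α : Type*} [DecidableEq α] (L : List α) (r : ℕ)
    (hr : runCount L = r) (p : ℕ) (hp : p < L.length) (dollar c : α)
    (hLp : L[p]'hp = dollar)
    (huniq : ∀ j (hj : j < L.length), L[j]'hj = dollar → j = p)
    (hc : c ≠ dollar)
    (hleft : ∀ (_ : 0 < p), L[p - 1]'(by omega) ≠ c)
    (hright : ∀ (h : p + 1 < L.length), L[p + 1]'h ≠ c)
    (q : ℕ) (hq : q ≤ L.length) :
    r + 1 ≤ runCount (((L.set p c).insertIdx q dollar)) := by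
  have hL : L = L.take p ++ dollar :: L.drop (p + 1) := by
    rw [← set_eq_take_cons_drop _ hp, ← hLp, set_getElem_self]
  have hA : dollar ∉ L.take p := by
    rw [mem_take_iff_getElem]
    rintro ⟨j, hj, hjd⟩
    have := huniq j _ hjd
    omega
  have hB : dollar ∉ L.drop (p + 1) := by
    rw [mem_drop_iff_getElem]
    rintro ⟨j, hj, hjd⟩
    have := huniq (p + 1 + j) (by omega) hjd
    omega
  have hcA : (L.take p).getLast? ≠ some c := by
    rw [getLast?_take]
    split_ifs with hp0
    · simp
    · rw [getElem?_eq_getElem (by omega)]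
      simpa using hleft (by omega)
  have hcB : (L.drop (p + 1)).head? ≠ some c := by
    rw [head?_drop]
    by_cases h : p + 1 < L.length
    · simpa [getElem?_eq_getElem h] using hright h
    · simp [getElem?_eq_none (by omega : L.length ≤ p + 1)]
  have hM : L.set p c = L.take p ++ c :: L.drop (p + 1) := set_eq_take_cons_drop c hp
  have key := runCount_add_one_le_insertIdx_of_replace hA hB hc hcA hcB
    (q := q) (by rwa [← hM, length_set])
  rwa [← hL, ← hM, hr] at key
end
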